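/- arXiv:1905.04542 — 3 statements merged into one kernel-verified Lean document; each statement's English description precedes it below -/
import Mathlib

section
/- Assume conditions (I1)–(I8). Then for every u ∈ Q \ {0}, the function (0,∞) ∋ t ↦ 𝒥̃(tu) attains its maximum at some t₀ > 0, and m(t₀u) ∈ N; in particular N ∩ m(Q) is nonempty. -/
open Topology Filter Set

noncomputable section

variable {X : Type*} [NormedAddCommGroup X] [NormedSpace ℝ X]

/-- Weak convergence of a sequence: `f (u n) → f w` for every continuous linear functional. -/
def WConv (u : ℕ → X) (w : X) : Prop :=
  ∀ f : X →L[ℝ] ℝ, Tendsto (fun n => f (u n)) atTop (𝓝 (f w))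

section SWAux
open NormedSpace
namespace SW
variable {X : Type*} [NormedAddCommGroup X] [NormedSpace ℝ X]

theorem exists_dual_annihilator {Z : Submodule ℝ X} (hZ : IsClosed (Z : Set X)) {x : X}
    (hx : x ∉ Z) : ∃ f : X →L[ℝ] ℝ, (∀ z ∈ Z, f z = 0) ∧ f x ≠ 0 := by
  obtain ⟨f, u, hfu, hux⟩ := geometric_hahn_banach_closed_point Z.convex hZ hx
  have h0 : (0 : ℝ) < u := by simpa using hfu 0 Z.zero_mem
  refine ⟨f, fun z hz => ?_, by linarith⟩
  by_contra h
  have hc : ((u + 1) / f z) * f z < u := by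
    simpa using hfu (((u + 1) / f z) • z) (Z.smul_mem _ hz)
  rw [div_mul_cancel₀ _ h] at hc
  linarith

/-- A normed space whose dual is separable is itself separable. -/
theorem separableSpace_of_dual_separable
    [h : TopologicalSpace.SeparableSpace (StrongDual ℝ X)] :
    TopologicalSpace.SeparableSpace X := by
  have : Nonempty (StrongDual ℝ X) := ⟨0⟩
  set d : ℕ → StrongDual ℝ X := TopologicalSpace.denseSeq (StrongDual ℝ X)
  have hd : DenseRange d := TopologicalSpace.denseRange_denseSeq _
  have hex : ∀ n : ℕ, ∃ x : X, ‖x‖ ≤ 1 ∧ ‖d n‖ / 2 ≤ ‖d n x‖ := by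
    intro n
    rcases eq_or_lt_of_le (norm_nonneg (d n)) with h0 | h0
    · exact ⟨0, by simp, by simp [← h0]⟩
    · by_contra hcon
      push_neg at hcon
      have : ‖d n‖ ≤ ‖d n‖ / 2 := by
        refine ContinuousLinearMap.opNorm_le_bound _ (by positivity) fun x => ?_
        rcases eq_or_ne x 0 with rfl | hx
        · simp
        · have h1 : ‖(‖x‖⁻¹ • x : X)‖ ≤ 1 := by
            rw [norm_smul, norm_inv, norm_norm, inv_mul_cancel₀ (norm_ne_zero_iff.2 hx)]
          have h2 := hcon (‖x‖⁻¹ • x) h1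
          rw [map_smul, norm_smul, norm_inv, norm_norm] at h2
          have hxpos : (0:ℝ) < ‖x‖ := norm_pos_iff.2 hx
          have h3 : ‖x‖ * (‖x‖⁻¹ * ‖(d n) x‖) ≤ ‖x‖ * (‖d n‖ / 2) :=
            mul_le_mul_of_nonneg_left h2.le hxpos.le
          rw [← mul_assoc, mul_inv_cancel₀ hxpos.ne', one_mul] at h3
          linarith
      linarith
  choose x hx1 hx2 using hex
  set Y : Submodule ℝ X := (Submodule.span ℝ (Set.range x)).topologicalClosure with hY
  have hYtop : Y = ⊤ := by
    by_contra hne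
    obtain ⟨w, hw⟩ : ∃ w : X, w ∉ Y := by
      by_contra hall
      push_neg at hall
      exact hne (Submodule.eq_top_iff'.2 hall)
    obtain ⟨f, hf0, hfw⟩ := exists_dual_annihilator (Z := Y) (Submodule.isClosed_topologicalClosure _) hw
    have hfpos : (0:ℝ) < ‖f‖ := by
      rcases eq_or_lt_of_le (norm_nonneg f) with h0 | h0
      · exact absurd (by simpa using congrArg (· w) ((ContinuousLinearMap.opNorm_zero_iff f).1 h0.symm)) hfw
      · exact h0
    obtain ⟨n, hn⟩ := Metric.denseRange_iff.1 hd f (‖f‖ / 4) (by linarith)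
    have hdist : ‖d n - f‖ < ‖f‖ / 4 := by
      rw [← dist_eq_norm]; rw [dist_comm]; exact hn
    have hnormdn : ‖f‖ - ‖f‖/4 ≤ ‖d n‖ := by
      have := norm_sub_norm_le (d n) f
      have h2 : ‖d n - f‖ ≥ ‖f‖ - ‖d n‖ := by
        have := norm_sub_norm_le f (d n)
        rw [norm_sub_rev] at this
        linarith
      linarith
    have hxnY : (x n : X) ∈ Y := by
      apply Submodule.le_topologicalClosure
      exact Submodule.subset_span ⟨n, rfl⟩
    have hfxn : f (x n) = 0 := hf0 _ hxnY
    have hsmall : ‖(d n) (x n)‖ ≤ ‖f‖ / 4 := by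
      calc ‖(d n) (x n)‖ = ‖(d n - f) (x n)‖ := by simp [hfxn]
        _ ≤ ‖d n - f‖ * ‖x n‖ := ContinuousLinearMap.le_opNorm _ _
        _ ≤ ‖f‖/4 * 1 := by
            apply mul_le_mul (le_of_lt hdist) (hx1 n) (norm_nonneg _) (by positivity)
        _ = ‖f‖/4 := mul_one _
    have hbig := hx2 n
    linarith
  have hsep : TopologicalSpace.IsSeparable (Y : Set X) :=
    (((Set.countable_range x).isSeparable).span).closure
  rw [hYtop] at hsep
  have : TopologicalSpace.IsSeparable (Set.univ : Set X) := by simpa using hsep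
  exact TopologicalSpace.isSeparable_univ_iff.1 this

end SW

namespace SW2
open SW
variable {X : Type*} [NormedAddCommGroup X] [NormedSpace ℝ X]

/-- The restriction of functionals to a submodule, as an element-wise construction. -/
theorem norm_comp_subtypeL_le (Z : Submodule ℝ X) (f : X →L[ℝ] ℝ) :
    ‖f.comp Z.subtypeL‖ ≤ ‖f‖ := by
  refine ContinuousLinearMap.opNorm_le_bound _ (norm_nonneg f) fun z => ?_
  simpa using f.le_opNorm (z : X)

/-- A closed subspace of a reflexive space is reflexive. -/
theorem subspace_reflexive
    (hrefl : Function.Surjective (inclusionInDoubleDual ℝ X))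
    (Z : Submodule ℝ X) (hZc : IsClosed (Z : Set X)) :
    Function.Surjective (inclusionInDoubleDual ℝ ↥Z) := by
  intro Φ
  -- Ψ : Dual X → ℝ, f ↦ Φ (f|_Z)
  let Ψlin : StrongDual ℝ X →ₗ[ℝ] ℝ :=
    { toFun := fun f => Φ (f.comp Z.subtypeL)
      map_add' := fun f g => by
        rw [ContinuousLinearMap.add_comp, map_add]
      map_smul' := fun c f => by
        rw [ContinuousLinearMap.smul_comp, map_smul]; rfl }
  have hbound : ∀ f : StrongDual ℝ X, ‖Ψlin f‖ ≤ ‖Φ‖ * ‖f‖ := by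
    intro f
    calc ‖Φ (f.comp Z.subtypeL)‖ ≤ ‖Φ‖ * ‖f.comp Z.subtypeL‖ := Φ.le_opNorm _
      _ ≤ ‖Φ‖ * ‖f‖ := by
          exact mul_le_mul_of_nonneg_left (norm_comp_subtypeL_le Z f) (norm_nonneg Φ)
  let Ψ : StrongDual ℝ (StrongDual ℝ X) := Ψlin.mkContinuous ‖Φ‖ hbound
  obtain ⟨x, hx⟩ := hrefl Ψ
  have hxval : ∀ f : StrongDual ℝ X, f x = Φ (f.comp Z.subtypeL) := by
    intro f
    have := congrArg (fun g => g f) hx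
    simpa [dual_def, Ψ, Ψlin] using this
  have hxZ : x ∈ Z := by
    by_contra hxz
    obtain ⟨f, hf0, hfx⟩ := exists_dual_annihilator hZc hxz
    have : f.comp Z.subtypeL = 0 := by
      ext z; exact hf0 _ z.2
    have h2 := hxval f
    rw [this, map_zero] at h2
    exact hfx h2
  refine ⟨⟨x, hxZ⟩, ?_⟩
  ext g
  obtain ⟨f, hf, -⟩ := exists_extension_norm_eq Z g
  have hcomp : f.comp Z.subtypeL = g := by
    ext z; exact hf z
  calc (inclusionInDoubleDual ℝ ↥Z ⟨x, hxZ⟩) g = g ⟨x, hxZ⟩ := rfl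
    _ = f x := (hf ⟨x, hxZ⟩).symm
    _ = Φ (f.comp Z.subtypeL) := hxval f
    _ = Φ g := by rw [hcomp]

end SW2


namespace SW3
open SW SW2
variable {X : Type*} [NormedAddCommGroup X] [NormedSpace ℝ X]

/-- Bounded sequences in a reflexive space have weakly convergent subsequences. -/
theorem exists_wconv_subseq
    (hrefl : Function.Surjective (inclusionInDoubleDual ℝ X))
    (v : ℕ → X) (C : ℝ) (hC : ∀ n, ‖v n‖ ≤ C) :
    ∃ ψ : ℕ → ℕ, StrictMono ψ ∧ ∃ w : X, WConv (fun k => v (ψ k)) w := by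
  have hC0 : 0 ≤ C := le_trans (norm_nonneg _) (hC 0)
  set Z : Submodule ℝ X := (Submodule.span ℝ (Set.range v)).topologicalClosure with hZdef
  have hZc : IsClosed (Z : Set X) := Submodule.isClosed_topologicalClosure _
  have hvZ : ∀ n, v n ∈ Z := fun n =>
    Submodule.le_topologicalClosure _ (Submodule.subset_span ⟨n, rfl⟩)
  have hZsep : TopologicalSpace.SeparableSpace ↥Z := by
    have h1 : TopologicalSpace.IsSeparable (Z : Set X) :=
      ((Set.countable_range v).isSeparable.span).closure
    exact h1.separableSpace
  have hZrefl := subspace_reflexive hrefl Z hZc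
  have hsep2 : TopologicalSpace.SeparableSpace (StrongDual ℝ (StrongDual ℝ ↥Z)) :=
    hZrefl.denseRange.separableSpace (inclusionInDoubleDual ℝ ↥Z).continuous
  have hsep1 : TopologicalSpace.SeparableSpace (StrongDual ℝ ↥Z) :=
    by have := @separableSpace_of_dual_separable (StrongDual ℝ ↥Z) _ _ hsep2; exact this
  have : Nonempty (StrongDual ℝ ↥Z) := ⟨0⟩
  set g : ℕ → StrongDual ℝ ↥Z := TopologicalSpace.denseSeq _ with hgdef
  have hg : DenseRange g := TopologicalSpace.denseRange_denseSeq _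
  set vZ : ℕ → ↥Z := fun n => ⟨v n, hvZ n⟩ with hvZdef
  have hvZnorm : ∀ n, ‖vZ n‖ ≤ C := fun n => hC n
  set K : Set (ℕ → ℝ) := Set.pi Set.univ (fun j => Icc (-(‖g j‖ * C)) (‖g j‖ * C)) with hKdef
  have hK : IsCompact K := isCompact_univ_pi fun j => isCompact_Icc
  have hmem : ∀ n, (fun j => g j (vZ n)) ∈ K := by
    intro n
    refine Set.mem_pi.2 fun j _ => ?_
    have hb : |g j (vZ n)| ≤ ‖g j‖ * C := by
      calc |g j (vZ n)| = ‖g j (vZ n)‖ := (Real.norm_eq_abs _).symm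
        _ ≤ ‖g j‖ * ‖vZ n‖ := (g j).le_opNorm _
        _ ≤ ‖g j‖ * C := mul_le_mul_of_nonneg_left (hvZnorm n) (norm_nonneg (g j))
    exact Set.mem_Icc.2 ⟨neg_le_of_abs_le hb, le_of_abs_le hb⟩
  obtain ⟨L, _, ψ, hψmono, hψtend⟩ := hK.tendsto_subseq hmem
  have hcoord : ∀ j, Tendsto (fun k => g j (vZ (ψ k))) atTop (𝓝 (L j)) := by
    intro j
    exact ((continuous_apply j).tendsto L).comp hψtend
  have hlim : ∀ f : StrongDual ℝ X, ∃ l : ℝ, Tendsto (fun k => f (v (ψ k))) atTop (𝓝 l) := by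
    intro f
    set fz : StrongDual ℝ ↥Z := f.comp Z.subtypeL with hfzdef
    have heq : ∀ k, f (v (ψ k)) = fz (vZ (ψ k)) := fun k => rfl
    suffices h : CauchySeq (fun k => fz (vZ (ψ k))) by
      obtain ⟨l, hl⟩ := cauchySeq_tendsto_of_complete h
      exact ⟨l, by simpa only [heq] using hl⟩
    rw [Metric.cauchySeq_iff]
    intro ε hε
    obtain ⟨j, hj⟩ := Metric.denseRange_iff.1 hg fz (ε / (4 * (C + 1))) (by positivity)
    have hcau : CauchySeq (fun k => g j (vZ (ψ k))) := (hcoord j).cauchySeq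
    rw [Metric.cauchySeq_iff] at hcau
    obtain ⟨N, hN⟩ := hcau (ε / 2) (by positivity)
    refine ⟨N, fun a ha b hb => ?_⟩
    have key : ∀ n, |fz (vZ n) - g j (vZ n)| ≤ ε / (4 * (C + 1)) * C := by
      intro n
      calc |fz (vZ n) - g j (vZ n)| = ‖(fz - g j) (vZ n)‖ := by
            rw [Real.norm_eq_abs]; simp
        _ ≤ ‖fz - g j‖ * ‖vZ n‖ := (fz - g j).le_opNorm _
        _ ≤ ε / (4 * (C + 1)) * C := by
            apply mul_le_mul _ (hvZnorm n) (norm_nonneg _) (by positivity)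
            have := hj
            exact (lt_of_eq_of_lt (dist_eq_norm fz (g j)).symm this).le
    have hquarter : ε / (4 * (C + 1)) * C ≤ ε / 4 := by
      rw [div_mul_eq_mul_div, div_le_div_iff₀ (by positivity) (by norm_num)]
      nlinarith
    have hmid := hN a ha b hb
    rw [Real.dist_eq] at hmid ⊢
    calc |fz (vZ (ψ a)) - fz (vZ (ψ b))|
        ≤ |fz (vZ (ψ a)) - g j (vZ (ψ a))| + |g j (vZ (ψ a)) - g j (vZ (ψ b))|
          + |g j (vZ (ψ b)) - fz (vZ (ψ b))| := by
          have := abs_sub_le (fz (vZ (ψ a))) (g j (vZ (ψ a))) (fz (vZ (ψ b)))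
          have h2 := abs_sub_le (g j (vZ (ψ a))) (g j (vZ (ψ b))) (fz (vZ (ψ b)))
          linarith
      _ < ε := by
          have k1 := key (ψ a)
          have k2 := key (ψ b)
          rw [abs_sub_comm (g j (vZ (ψ b)))] at *
          linarith
  choose lim hlimt using hlim
  have hadd : ∀ f h : StrongDual ℝ X, lim (f + h) = lim f + lim h := fun f h =>
    tendsto_nhds_unique (hlimt (f + h)) (by
      simpa only [ContinuousLinearMap.add_apply] using (hlimt f).add (hlimt h))
  have hsmul : ∀ (c : ℝ) (f : StrongDual ℝ X), lim (c • f) = c * lim f := fun c f =>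
    tendsto_nhds_unique (hlimt (c • f)) (by
      simpa only [ContinuousLinearMap.smul_apply, smul_eq_mul] using (hlimt f).const_mul c)
  have hbound : ∀ f : StrongDual ℝ X, ‖lim f‖ ≤ C * ‖f‖ := by
    intro f
    have h1 : ∀ k, ‖f (v (ψ k))‖ ≤ ‖f‖ * C := fun k =>
      le_trans (f.le_opNorm _) (mul_le_mul_of_nonneg_left (hC _) (norm_nonneg f))
    have h2 := le_of_tendsto' (hlimt f).norm h1
    linarith [h2, mul_comm ‖f‖ C]
  let Ψlin : StrongDual ℝ X →ₗ[ℝ] ℝ :=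
    { toFun := lim
      map_add' := hadd
      map_smul' := fun c f => by simpa using hsmul c f }
  let Ψ : StrongDual ℝ (StrongDual ℝ X) := Ψlin.mkContinuous C hbound
  obtain ⟨w, hw⟩ := hrefl Ψ
  refine ⟨ψ, hψmono, w, fun f => ?_⟩
  have hfw : f w = lim f := by
    have h3 := congrArg (fun Θ : StrongDual ℝ (StrongDual ℝ X) => Θ f) hw
    simpa [dual_def, Ψ, Ψlin] using h3
  rw [hfw]
  exact hlimt f

end SW3

end SWAux

/-- The setting: `X` is a reflexive Banach space with a topological direct sum decomposition
`X = X⁺ ⊕ X⁻` into closed subspaces, `X⁺` is a Hilbert space (its norm satisfies the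
parallelogram law), `‖u‖² = ‖u⁺‖² + ‖u⁻‖²`, and `I : X → ℝ` is of class `C¹`. -/
structure Setting (X : Type*) [NormedAddCommGroup X] [NormedSpace ℝ X] where
  complete : CompleteSpace X
  reflexive : Function.Surjective (NormedSpace.inclusionInDoubleDual ℝ X)
  Xp : Submodule ℝ X
  Xm : Submodule ℝ X
  Xp_closed : IsClosed (Xp : Set X)
  Xm_closed : IsClosed (Xm : Set X)
  compl : IsCompl Xp Xm
  P : X →ₗ[ℝ] X
  Pm : X →ₗ[ℝ] X
  P_mem : ∀ u, P u ∈ Xp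
  Pm_mem : ∀ u, Pm u ∈ Xm
  P_add_Pm : ∀ u, P u + Pm u = u
  P_cont : Continuous P
  Pm_cont : Continuous Pm
  norm_sq : ∀ u : X, ‖u‖ ^ 2 = ‖P u‖ ^ 2 + ‖Pm u‖ ^ 2
  parallelogram : ∀ u ∈ Xp, ∀ v ∈ Xp,
    ‖u + v‖ ^ 2 + ‖u - v‖ ^ 2 = 2 * ‖u‖ ^ 2 + 2 * ‖v‖ ^ 2
  I : X → ℝ
  I_C1 : ContDiff ℝ 1 I

namespace Setting

variable (S : Setting X)

/-- The functional `J(u) = ½‖u⁺‖² − I(u)`. -/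
def J : X → ℝ := fun u => (1 / 2) * ‖S.P u‖ ^ 2 - S.I u

/-- `M = {u ∈ X : I'(u)v = 0 for all v ∈ X⁻}`. -/
def M : Set X := {u | ∀ v ∈ S.Xm, fderiv ℝ S.I u v = 0}

/-- The Nehari–Pankov set `N = {u ∈ X \ X⁻ : J'(u)u = 0 and J'(u)v = 0 for all v ∈ X⁻}`. -/
def N : Set X :=
  {u | u ∉ S.Xm ∧ fderiv ℝ S.J u u = 0 ∧ ∀ v ∈ S.Xm, fderiv ℝ S.J u v = 0}

/-- `T`-convergence: `uₙ⁺ → u⁺` in norm and `uₙ⁻ ⇀ u⁻` weakly. -/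
def TConv (u : ℕ → X) (w : X) : Prop :=
  Tendsto (fun n => S.P (u n)) atTop (𝓝 (S.P w)) ∧ WConv (fun n => S.Pm (u n)) (S.Pm w)

/-- (I1): `I(u) ≥ I(0) = 0`. -/
def I1 : Prop := S.I 0 = 0 ∧ ∀ u, 0 ≤ S.I u

/-- (I2): `I` is sequentially `T`-lower semicontinuous. -/
def I2 : Prop := ∀ (u : ℕ → X) (w : X), S.TConv u w →
  S.I w ≤ atTop.liminf fun n => S.I (u n)

/-- (I3): if `uₙ →_T u` and `I(uₙ) → I(u)` then `uₙ → u` in norm. -/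
def I3 : Prop := ∀ (u : ℕ → X) (w : X), S.TConv u w →
  Tendsto (fun n => S.I (u n)) atTop (𝓝 (S.I w)) → Tendsto u atTop (𝓝 w)

/-- (I4): `‖uₙ⁺‖ + I(uₙ) → ∞` whenever `‖uₙ‖ → ∞`. -/
def I4 : Prop := ∀ u : ℕ → X, Tendsto (fun n => ‖u n‖) atTop atTop →
  Tendsto (fun n => ‖S.P (u n)‖ + S.I (u n)) atTop atTop

/-- (I5): if `u ∈ M` then `I(u) < I(u + v)` for every `v ∈ X⁻ \ {0}`. -/
def I5 : Prop := ∀ u ∈ S.M, ∀ v ∈ S.Xm, v ≠ 0 → S.I u < S.I (u + v)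

/-- `m : X⁺ → M` assigns to each `w ∈ X⁺` the point `m(w) ∈ M ∩ (w + X⁻)` which is the
unique maximizer of `J` on `w + X⁻`. -/
def IsMaxMap (m : X → X) : Prop :=
  ∀ w ∈ S.Xp, m w ∈ S.M ∧ m w - w ∈ S.Xm ∧
    ∀ z ∈ S.Xm, w + z ≠ m w → S.J (w + z) < S.J (m w)

/-- The reduced functional `𝒥̃ = J ∘ m` on `X⁺`. -/
def Jt (m : X → X) : ↥S.Xp → ℝ := fun w => S.J (m (w : X))

/-- (I6): with radius `r` the infimum `a` of `J` on the sphere of radius `r` in `X⁺`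
is positive. -/
def I6 (r a : ℝ) : Prop :=
  0 < r ∧ a = sInf (S.J '' {u : X | u ∈ S.Xp ∧ ‖u‖ = r}) ∧ 0 < a

/-- (I7): `Q` is an infinite-dimensional closed subspace of `X⁺` such that
`I(m(tₙuₙ))/tₙ² → ∞` whenever `tₙ → ∞`, `uₙ ∈ Q` and `uₙ → u ≠ 0`. -/
def I7 (m : X → X) (Q : Submodule ℝ X) : Prop :=
  Q ≤ S.Xp ∧ IsClosed (Q : Set X) ∧ ¬ FiniteDimensional ℝ Q ∧
    ∀ (t : ℕ → ℝ) (u : ℕ → X) (w : X), Tendsto t atTop atTop → (∀ n, u n ∈ Q) →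
      Tendsto u atTop (𝓝 w) → w ≠ 0 →
      Tendsto (fun n => S.I (m (t n • u n)) / (t n) ^ 2) atTop atTop

/-- (I8): `((t²−1)/2)·I'(u)u + t·I'(u)v + I(u) − I(tu+v) ≤ 0` for `u ∈ N`, `t ≥ 0`,
`v ∈ X⁻`. -/
def I8 : Prop :=
  ∀ u ∈ S.N, ∀ t : ℝ, 0 ≤ t → ∀ v ∈ S.Xm,
    ((t ^ 2 - 1) / 2) * fderiv ℝ S.I u u + t * fderiv ℝ S.I u v
      + S.I u - S.I (t • u + v) ≤ 0


-- Auxiliary lemmas about the projections and `J`.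
theorem P_eq_of_mem {u : X} (hu : u ∈ S.Xp) : S.P u = u := by
  have h2 : S.P u = u - S.Pm u := eq_sub_of_add_eq (S.P_add_Pm u)
  have h1 : S.P u - u = -(S.Pm u) := by rw [h2]; abel
  have hXm : S.P u - u ∈ S.Xm := by rw [h1]; exact neg_mem (S.Pm_mem u)
  have hXp : S.P u - u ∈ S.Xp := sub_mem (S.P_mem u) hu
  have h0 : S.P u - u = 0 := Submodule.disjoint_def.1 S.compl.disjoint _ hXp hXm
  exact sub_eq_zero.1 h0

theorem P_eq_zero_of_mem {u : X} (hu : u ∈ S.Xm) : S.P u = 0 := by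
  have hXm : S.P u ∈ S.Xm := by
    have h : S.P u = u - S.Pm u := eq_sub_of_add_eq (S.P_add_Pm u)
    rw [h]; exact sub_mem hu (S.Pm_mem u)
  exact Submodule.disjoint_def.1 S.compl.disjoint _ (S.P_mem u) hXm

theorem J_val {w z : X} (hw : w ∈ S.Xp) (hz : z ∈ S.Xm) :
    S.J (w + z) = ‖w‖ ^ 2 / 2 - S.I (w + z) := by
  simp only [Setting.J]
  rw [map_add, S.P_eq_of_mem hw, S.P_eq_zero_of_mem hz, add_zero]
  ring

theorem J_differentiable : Differentiable ℝ S.J := by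
  letI : InnerProductSpace ℝ ↥S.Xp := InnerProductSpace.ofNorm ℝ (fun x y => by
    have h := S.parallelogram (x : X) x.2 (y : X) y.2
    have e1 : ‖x + y‖ = ‖((x : X) + (y : X))‖ := rfl
    have e2 : ‖x - y‖ = ‖((x : X) - (y : X))‖ := rfl
    have e3 : ‖x‖ = ‖(x : X)‖ := rfl
    have e4 : ‖y‖ = ‖(y : X)‖ := rfl
    rw [e1, e2, e3, e4]
    nlinarith [h])
  have hPc : Continuous (fun u : X => (⟨S.P u, S.P_mem u⟩ : ↥S.Xp)) :=
    Continuous.subtype_mk S.P_cont _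
  let Pc : X →L[ℝ] ↥S.Xp :=
    { toLinearMap := S.P.codRestrict S.Xp S.P_mem
      cont := hPc }
  have hns : (fun u : X => ‖S.P u‖ ^ 2) = (fun x : ↥S.Xp => ‖x‖ ^ 2) ∘ Pc := by
    funext u; rfl
  have hdiff : Differentiable ℝ (fun u : X => ‖S.P u‖ ^ 2) := by
    rw [hns]
    exact ((contDiff_norm_sq ℝ (E := ↥S.Xp)).differentiable one_ne_zero).comp Pc.differentiable
  have hI : Differentiable ℝ S.I := S.I_C1.differentiable one_ne_zero
  have : S.J = fun u => (1 / 2 : ℝ) * ‖S.P u‖ ^ 2 - S.I u := rfl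
  rw [this]
  exact (hdiff.const_mul _).sub hI

theorem fderiv_J_zero_of_localmax {u₀ w : X}
    (hmax : ∀ᶠ s in 𝓝 (0 : ℝ), S.J (u₀ + s • w) ≤ S.J u₀) :
    fderiv ℝ S.J u₀ w = 0 := by
  have hdiff : DifferentiableAt ℝ S.J u₀ := S.J_differentiable u₀
  have hline : HasDerivAt (fun s : ℝ => u₀ + s • w) w 0 := by
    simpa using ((hasDerivAt_id (0 : ℝ)).smul_const w).const_add u₀
  have hcomp : HasDerivAt (fun s : ℝ => S.J (u₀ + s • w)) (fderiv ℝ S.J u₀ w) 0 := by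
    have h0 : (fun s : ℝ => u₀ + s • w) 0 = u₀ := by simp
    have := (h0 ▸ hdiff.hasFDerivAt).comp_hasDerivAt 0 hline
    rw [h0] at this; exact this
  have hlm : IsLocalMax (fun s : ℝ => S.J (u₀ + s • w)) 0 := by
    have h0 : S.J (u₀ + (0 : ℝ) • w) = S.J u₀ := by simp
    unfold IsLocalMax IsMaxFilter
    simpa [h0] using hmax
  have := hlm.deriv_eq_zero
  rwa [hcomp.deriv] at this

end Setting

/-- Under (I1)–(I8): for every `u ∈ Q \ {0}`, the map `(0,∞) ∋ t ↦ 𝒥̃(tu)` attains its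
maximum at some `t₀ > 0` with `m(t₀u) ∈ N`; in particular `N ∩ m(Q)` is nonempty. -/
theorem statement9
    {X : Type*} [NormedAddCommGroup X] [NormedSpace ℝ X]
    (S : Setting X)
    (hI1 : S.I1) (hI2 : S.I2) (hI3 : S.I3) (hI4 : S.I4) (hI5 : S.I5)
    (m : X → X) (hm : S.IsMaxMap m)
    (r a : ℝ) (hI6 : S.I6 r a) (Q : Submodule ℝ X) (hI7 : S.I7 m Q) (hI8 : S.I8) :
    (∀ u ∈ Q, u ≠ 0 → ∃ t₀ : ℝ, 0 < t₀ ∧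
      (∀ t : ℝ, 0 < t → S.J (m (t • u)) ≤ S.J (m (t₀ • u))) ∧ m (t₀ • u) ∈ S.N) ∧
    (S.N ∩ m '' (Q : Set X)).Nonempty := by
  obtain ⟨hI0, hInn⟩ := hI1
  obtain ⟨hr, ha_eq, ha_pos⟩ := hI6
  obtain ⟨hQp, hQclosed, hQinf, hI7'⟩ := hI7
  have main : ∀ u ∈ Q, u ≠ 0 → ∃ t₀ : ℝ, 0 < t₀ ∧
      (∀ t : ℝ, 0 < t → S.J (m (t • u)) ≤ S.J (m (t₀ • u))) ∧ m (t₀ • u) ∈ S.N := by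
    intro u huQ hu0
    have huXp : u ∈ S.Xp := hQp huQ
    have hunorm : 0 < ‖u‖ := norm_pos_iff.2 hu0
    set φ : ℝ → ℝ := fun t => S.J (m (t • u)) with hφdef
    have hmem : ∀ t : ℝ, t • u ∈ S.Xp := fun t => S.Xp.smul_mem t huXp
    have hmsub : ∀ t : ℝ, m (t • u) - t • u ∈ S.Xm := fun t => (hm _ (hmem t)).2.1
    have hmmax : ∀ t : ℝ, ∀ z ∈ S.Xm, S.J (t • u + z) ≤ φ t := by
      intro t z hz
      rcases eq_or_ne (t • u + z) (m (t • u)) with he | hne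
      · show S.J (t • u + z) ≤ S.J (m (t • u))
        rw [← he]
      · exact ((hm _ (hmem t)).2.2 z hz hne).le
    have hmdec : ∀ t : ℝ, m (t • u) = t • u + (m (t • u) - t • u) := fun t => by abel
    have hPm : ∀ t : ℝ, S.P (m (t • u)) = t • u := by
      intro t
      rw [hmdec t, map_add, S.P_eq_of_mem (hmem t), S.P_eq_zero_of_mem (hmsub t), add_zero]
    have hnsmul : ∀ t : ℝ, ‖t • u‖ ^ 2 = t ^ 2 * ‖u‖ ^ 2 := by
      intro t
      rw [norm_smul, Real.norm_eq_abs, mul_pow, sq_abs]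
    have hφval : ∀ t : ℝ, φ t = t ^ 2 * ‖u‖ ^ 2 / 2 - S.I (m (t • u)) := by
      intro t
      rw [hφdef]
      show S.J (m (t • u)) = _
      rw [hmdec t, S.J_val (hmem t) (hmsub t), ← hmdec t, hnsmul t]
    have hφle : ∀ t : ℝ, φ t ≤ t ^ 2 * ‖u‖ ^ 2 / 2 := by
      intro t
      have := hInn (m (t • u))
      rw [hφval t]; linarith
    have hJlower : ∀ t : ℝ, S.J (t • u) ≤ φ t := fun t => by
      simpa using hmmax t 0 (zero_mem _)
    set ta : ℝ := r / ‖u‖ with hta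
    have hta_pos : 0 < ta := div_pos hr hunorm
    have htanorm : ‖ta • u‖ = r := by
      rw [norm_smul, Real.norm_eq_abs, abs_of_pos hta_pos, hta,
        div_mul_cancel₀ _ hunorm.ne']
    have haJ : a ≤ S.J (ta • u) := by
      have hmemset : S.J (ta • u) ∈ S.J '' {x : X | x ∈ S.Xp ∧ ‖x‖ = r} :=
        ⟨ta • u, ⟨hmem ta, htanorm⟩, rfl⟩
      have hbdd : BddBelow (S.J '' {x : X | x ∈ S.Xp ∧ ‖x‖ = r}) := by
        by_contra hb
        rw [ha_eq, Real.sInf_of_not_bddBelow hb] at ha_pos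
        exact lt_irrefl 0 ha_pos
      rw [ha_eq]
      exact csInf_le hbdd hmemset
    have hφta : a ≤ φ ta := le_trans haJ (hJlower ta)
    set δ : ℝ := min ta (Real.sqrt a / ‖u‖) with hδdef
    have hδpos : 0 < δ := lt_min hta_pos (div_pos (Real.sqrt_pos.2 ha_pos) hunorm)
    have hδta : δ ≤ ta := min_le_left _ _
    have hφsmall : ∀ t : ℝ, 0 < t → t < δ → φ t < a := by
      intro t ht htδ
      have h1 : t < Real.sqrt a / ‖u‖ := lt_of_lt_of_le htδ (min_le_right _ _)
      have h2 : t * ‖u‖ < Real.sqrt a := (lt_div_iff₀ hunorm).1 h1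
      have h3 : t ^ 2 * ‖u‖ ^ 2 < a := by
        have h2' : (0:ℝ) ≤ t * ‖u‖ := mul_nonneg ht.le (norm_nonneg u)
        have h5 := mul_self_lt_mul_self h2' h2
        rw [Real.mul_self_sqrt ha_pos.le] at h5
        calc t ^ 2 * ‖u‖ ^ 2 = (t * ‖u‖) * (t * ‖u‖) := by ring
          _ < a := h5
      have h4 := hφle t
      have h5 : (0:ℝ) ≤ t ^ 2 * ‖u‖ ^ 2 := mul_nonneg (sq_nonneg t) (sq_nonneg ‖u‖)
      linarith
    have hbig : ∃ T : ℝ, ta ≤ T ∧ ∀ t : ℝ, T < t → φ t < a := by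
      by_contra hcon
      push_neg at hcon
      have hsel : ∀ n : ℕ, ∃ t : ℝ, max ta (n : ℝ) < t ∧ a ≤ φ t := fun n =>
        hcon (max ta (n : ℝ)) (le_max_left _ _)
      choose ts hts1 hts2 using hsel
      have htsinf : Tendsto ts atTop atTop := by
        refine tendsto_atTop_mono (f := fun n : ℕ => (n : ℝ)) ?_ tendsto_natCast_atTop_atTop
        exact fun n => le_of_lt (lt_of_le_of_lt (le_max_right ta (n : ℝ)) (hts1 n))
      have h7 := hI7' ts (fun _ => u) u htsinf (fun _ => huQ) tendsto_const_nhds hu0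
      have hub : ∀ n, S.I (m (ts n • u)) / (ts n) ^ 2 ≤ ‖u‖ ^ 2 / 2 := by
        intro n
        have h1 := hts2 n
        have h2 := hφval (ts n)
        have htspos : 0 < ts n :=
          lt_of_le_of_lt (le_trans hta_pos.le (le_max_left ta (n : ℝ))) (hts1 n)
        rw [div_le_iff₀ (by positivity)]
        nlinarith
      obtain ⟨n, hn⟩ := (h7.eventually (eventually_gt_atTop (‖u‖ ^ 2 / 2))).exists
      exact absurd (hub n) (not_le.2 hn)
    obtain ⟨T, htaT, hφbig⟩ := hbig
    set A : Set ℝ := φ '' Icc δ T with hAdef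
    have htamem : ta ∈ Icc δ T := ⟨hδta, htaT⟩
    have hAne : A.Nonempty := ⟨φ ta, ta, htamem, rfl⟩
    have hAbdd : BddAbove A := by
      refine ⟨T ^ 2 * ‖u‖ ^ 2 / 2, ?_⟩
      rintro y ⟨t, ⟨ht1, ht2⟩, rfl⟩
      have h0t : 0 < t := lt_of_lt_of_le hδpos ht1
      have htt : t ^ 2 ≤ T ^ 2 := by nlinarith
      have h5 := mul_le_mul_of_nonneg_right htt (sq_nonneg ‖u‖)
      have h6 := hφle t
      linarith
    set c : ℝ := sSup A with hcdef
    have hac : a ≤ c := le_trans hφta (le_csSup hAbdd ⟨ta, htamem, rfl⟩)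
    have hms : ∀ n : ℕ, ∃ t, t ∈ Icc δ T ∧ c - 1 / ((n : ℝ) + 1) < φ t := by
      intro n
      have hlt : c - 1 / ((n : ℝ) + 1) < c := by
        have : (0 : ℝ) < 1 / ((n : ℝ) + 1) := by positivity
        linarith
      obtain ⟨y, hyA, hy⟩ := exists_lt_of_lt_csSup hAne hlt
      obtain ⟨t, htI, rfl⟩ := hyA
      exact ⟨t, htI, hy⟩
    choose tn htnI htnφ using hms
    have htnle : ∀ n, φ (tn n) ≤ c := fun n => le_csSup hAbdd ⟨tn n, htnI n, rfl⟩
    have hφtn : Tendsto (fun n => φ (tn n)) atTop (𝓝 c) := by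
      apply tendsto_of_tendsto_of_tendsto_of_le_of_le
        (g := fun n : ℕ => c - 1 / ((n : ℝ) + 1)) (h := fun _ : ℕ => c)
      · have h1 : Tendsto (fun n : ℕ => 1 / ((n : ℝ) + 1)) atTop (𝓝 0) :=
          tendsto_one_div_add_atTop_nhds_zero_nat
        have := tendsto_const_nhds (x := c) (f := atTop (α := ℕ)) |>.sub h1
        simpa using this
      · exact tendsto_const_nhds
      · exact fun n => (htnφ n).le
      · exact htnle
    obtain ⟨t₀, ht₀I, σ, hσmono, hσtend⟩ := isCompact_Icc.tendsto_subseq htnI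
    have ht₀pos : 0 < t₀ := lt_of_lt_of_le hδpos ht₀I.1
    -- boundedness of the maximizing sequence
    have hIub : ∀ n, S.I (m (tn n • u)) ≤ T ^ 2 * ‖u‖ ^ 2 / 2 + (1 - c) := by
      intro n
      have h1 := htnφ n
      have h2 := hφval (tn n)
      have h3 : (tn n) ^ 2 * ‖u‖ ^ 2 / 2 ≤ T ^ 2 * ‖u‖ ^ 2 / 2 := by
        have ht1 := (htnI n).1
        have ht2 := (htnI n).2
        have h0t : 0 < tn n := lt_of_lt_of_le hδpos ht1
        have htt : (tn n) ^ 2 ≤ T ^ 2 := by nlinarith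
        have := mul_le_mul_of_nonneg_right htt (sq_nonneg ‖u‖)
        linarith
      have h4 : 1 / ((n : ℝ) + 1) ≤ 1 := by
        rw [div_le_one (by positivity)]
        simp
      linarith
    have hnormP : ∀ n, ‖S.P (m (tn n • u))‖ ≤ T * ‖u‖ := by
      intro n
      rw [hPm, norm_smul, Real.norm_eq_abs,
        abs_of_pos (lt_of_lt_of_le hδpos (htnI n).1)]
      exact mul_le_mul_of_nonneg_right (htnI n).2 (norm_nonneg u)
    have hbddnorm : ∃ C : ℝ, ∀ n, ‖m (tn n • u)‖ ≤ C := by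
      by_contra hcb
      push_neg at hcb
      have hsel : ∀ k : ℕ, ∃ n, (k : ℝ) < ‖m (tn n • u)‖ := fun k => hcb k
      choose nk hnk using hsel
      have h4 := hI4 (fun k => m (tn (nk k) • u))
        (tendsto_atTop_mono (fun k => (hnk k).le) tendsto_natCast_atTop_atTop)
      obtain ⟨k, hk⟩ := (h4.eventually
        (eventually_gt_atTop (T * ‖u‖ + (T ^ 2 * ‖u‖ ^ 2 / 2 + (1 - c))))).exists
      have := hnormP (nk k)
      have := hIub (nk k)
      linarith
    obtain ⟨C, hCb⟩ := hbddnorm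
    set vn : ℕ → X := fun k => m (tn (σ k) • u) - tn (σ k) • u with hvndef
    have hvnXm : ∀ k, vn k ∈ S.Xm := fun k => hmsub _
    have hvnb : ∀ k, ‖vn k‖ ≤ C + T * ‖u‖ := by
      intro k
      have h1 : ‖vn k‖ ≤ ‖m (tn (σ k) • u)‖ + ‖tn (σ k) • u‖ := norm_sub_le _ _
      have h2 := hCb (σ k)
      have h3 : ‖tn (σ k) • u‖ ≤ T * ‖u‖ := by
        rw [← hPm (tn (σ k))]
        exact hnormP (σ k)
      linarith
    obtain ⟨ψ, hψmono, w', hwconv⟩ := SW3.exists_wconv_subseq S.reflexive vn _ hvnb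
    have hw'Xm : w' ∈ S.Xm := by
      by_contra hw
      obtain ⟨f, hf0, hfx⟩ := SW.exists_dual_annihilator S.Xm_closed hw
      have hz : ∀ k, f (vn (ψ k)) = 0 := fun k => hf0 _ (hvnXm _)
      have h2 : Tendsto (fun _ : ℕ => (0 : ℝ)) atTop (𝓝 (f w')) := by
        have := hwconv f
        simpa [hz] using this
      exact hfx (tendsto_nhds_unique h2 tendsto_const_nhds)
    set un : ℕ → X := fun k => m (tn (σ (ψ k)) • u) with hundef
    set wlim : X := t₀ • u + w' with hwlimdef
    have htσψ : Tendsto (fun k => tn (σ (ψ k))) atTop (𝓝 t₀) :=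
      hσtend.comp hψmono.tendsto_atTop
    have hPwlim : S.P wlim = t₀ • u := by
      rw [hwlimdef, map_add, S.P_eq_of_mem (hmem t₀), S.P_eq_zero_of_mem hw'Xm, add_zero]
    have hTconv : S.TConv un wlim := by
      constructor
      · rw [hPwlim]
        have : ∀ k, S.P (un k) = tn (σ (ψ k)) • u := fun k => hPm _
        simp only [this]
        exact htσψ.smul_const u
      · have hPmwlim : S.Pm wlim = w' := by
          have h1 : S.Pm wlim = wlim - S.P wlim := by
            rw [eq_sub_iff_add_eq, add_comm]; exact S.P_add_Pm _
          rw [h1, hPwlim, hwlimdef]; abel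
        have hPmun : ∀ k, S.Pm (un k) = vn (ψ k) := by
          intro k
          have h1 : S.Pm (un k) = un k - S.P (un k) := by
            rw [eq_sub_iff_add_eq, add_comm]; exact S.P_add_Pm _
          rw [h1, hundef]
          simp only []
          rw [hPm]
        rw [hPmwlim]
        intro f
        have := hwconv f
        simp only [Function.comp] at this ⊢
        simpa [hPmun] using this
    have hI2' := hI2 un wlim hTconv
    have hIun : Tendsto (fun k => S.I (un k)) atTop (𝓝 (t₀ ^ 2 * ‖u‖ ^ 2 / 2 - c)) := by
      have heq : ∀ k, S.I (un k) = (tn (σ (ψ k))) ^ 2 * ‖u‖ ^ 2 / 2 - φ (tn (σ (ψ k))) := by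
        intro k
        have := hφval (tn (σ (ψ k)))
        rw [hundef]
        simp only []
        linarith
      have hφc : Tendsto (fun k => φ (tn (σ (ψ k)))) atTop (𝓝 c) :=
        hφtn.comp ((hσmono.comp hψmono).tendsto_atTop)
      have hsq : Tendsto (fun k => (tn (σ (ψ k))) ^ 2 * ‖u‖ ^ 2 / 2) atTop
          (𝓝 (t₀ ^ 2 * ‖u‖ ^ 2 / 2)) := by
        have := ((htσψ.pow 2).mul_const (‖u‖ ^ 2)).div_const 2
        exact this
      have := hsq.sub hφc
      simp only [heq]
      exact this
    have hliminf : S.I wlim ≤ t₀ ^ 2 * ‖u‖ ^ 2 / 2 - c := by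
      rw [← hIun.liminf_eq]
      exact hI2'
    have hcφt₀ : c ≤ φ t₀ := by
      have hw2 : S.J wlim = t₀ ^ 2 * ‖u‖ ^ 2 / 2 - S.I wlim := by
        rw [hwlimdef, S.J_val (hmem t₀) hw'Xm, hnsmul t₀]
      have h3 : S.J wlim ≤ φ t₀ := by
        rw [hwlimdef]
        exact hmmax t₀ w' hw'Xm
      linarith
    have hφt₀c : φ t₀ ≤ c := le_csSup hAbdd ⟨t₀, ht₀I, rfl⟩
    have hglobal : ∀ t : ℝ, 0 < t → φ t ≤ φ t₀ := by
      intro t ht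
      rcases le_or_gt t T with h1 | h1
      · rcases le_or_gt δ t with h2 | h2
        · exact le_trans (le_csSup hAbdd ⟨t, ⟨h2, h1⟩, rfl⟩) hcφt₀
        · exact le_trans (hφsmall t ht h2).le (le_trans hac hcφt₀)
      · exact le_trans (hφbig t h1).le (le_trans hac hcφt₀)
    -- N membership
    set u₀ : X := m (t₀ • u) with hu₀def
    set v₀ : X := u₀ - t₀ • u with hv₀def
    have hv₀Xm : v₀ ∈ S.Xm := hmsub t₀
    have hdXm : ∀ v ∈ S.Xm, fderiv ℝ S.J u₀ v = 0 := by
      intro v hv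
      apply S.fderiv_J_zero_of_localmax
      filter_upwards with s
      have heq : u₀ + s • v = t₀ • u + (v₀ + s • v) := by rw [hv₀def]; abel
      rw [heq]
      exact hmmax t₀ _ (S.Xm.add_mem hv₀Xm (S.Xm.smul_mem s hv))
    have hdu : fderiv ℝ S.J u₀ u = 0 := by
      apply S.fderiv_J_zero_of_localmax
      have hnb : Ioi (-t₀) ∈ 𝓝 (0 : ℝ) := Ioi_mem_nhds (neg_lt_zero.2 ht₀pos)
      filter_upwards [hnb] with s hs
      have hts : 0 < t₀ + s := by
        have := mem_Ioi.1 hs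
        linarith
      have heq : u₀ + s • u = (t₀ + s) • u + v₀ := by
        rw [hv₀def, add_smul]; abel
      rw [heq]
      calc S.J ((t₀ + s) • u + v₀) ≤ φ (t₀ + s) := hmmax _ _ hv₀Xm
        _ ≤ φ t₀ := hglobal _ hts
        _ = S.J u₀ := rfl
    refine ⟨t₀, ht₀pos, hglobal, ?_, ?_, fun v hv => hdXm v hv⟩
    · intro hmem0
      have h1 : S.P u₀ = 0 := S.P_eq_zero_of_mem hmem0
      rw [hu₀def, hPm t₀] at h1
      rcases smul_eq_zero.1 h1 with h | h
      · exact ht₀pos.ne' h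
      · exact hu0 h
    · have hdec : u₀ = t₀ • u + v₀ := by rw [hv₀def]; abel
      have h2 : fderiv ℝ S.J u₀ u₀ = fderiv ℝ S.J u₀ (t₀ • u + v₀) := by rw [← hdec]
      rw [h2, map_add, map_smul, hdu, hdXm v₀ hv₀Xm, smul_eq_mul, mul_zero, add_zero]
  refine ⟨main, ?_⟩
  obtain ⟨u, huQ, hu0⟩ : ∃ u, u ∈ Q ∧ u ≠ 0 := by
    by_contra h
    push_neg at h
    apply hQinf
    have hQbot : Q = ⊥ := by
      ext x
      simp only [Submodule.mem_bot]
      exact ⟨fun hx => h x hx, fun hx => hx ▸ Q.zero_mem⟩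
    rw [hQbot]
    infer_instance
  obtain ⟨t₀, ht₀, hmax, hN⟩ := main u huQ hu0
  exact ⟨m (t₀ • u), hN, ⟨t₀ • u, Q.smul_mem _ huQ, rfl⟩⟩
end
end

section
/- Assume (g1) and (g4). Then g(u)·u ≥ 2·G(u) for all u ∈ ℝ. -/
open Topology Filter Set

noncomputable section

/-- `G(u) = ∫₀ᵘ g(s) ds`. -/
def Gfun (g : ℝ → ℝ) (u : ℝ) : ℝ := ∫ s in (0 : ℝ)..u, g s

/-- (g1): `g(u)/u → 0` as `u → 0`. -/
def G1 (g : ℝ → ℝ) : Prop := Tendsto (fun u => g u / u) (𝓝[≠] (0 : ℝ)) (𝓝 0)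

/-- (g4): `u ↦ g(u)/|u|` is nondecreasing on `(−∞,0)` and on `(0,∞)`. -/
def G4 (g : ℝ → ℝ) : Prop :=
  MonotoneOn (fun u => g u / |u|) (Iio (0 : ℝ)) ∧
    MonotoneOn (fun u => g u / |u|) (Ioi (0 : ℝ))

/-- Under (g1) and (g4): `g(u)·u ≥ 2·G(u)` for all `u`. -/
theorem statement13 (g : ℝ → ℝ) (hg : Continuous g) (hg1 : G1 g) (hg4 : G4 g) :
    ∀ u : ℝ, 2 * Gfun g u ≤ g u * u := by
  have g0 : g 0 = 0 := by
    have h1 : Tendsto g (𝓝[≠] (0:ℝ)) (𝓝 0) := by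
      have h := hg1.mul (tendsto_id.mono_left (nhdsWithin_le_nhds : 𝓝[≠] (0:ℝ) ≤ 𝓝 0))
      rw [zero_mul] at h
      refine h.congr' ?_
      filter_upwards [self_mem_nhdsWithin] with x hx
      simp only [id_eq]
      exact div_mul_cancel₀ (g x) hx
    have h2 : Tendsto g (𝓝[≠] (0:ℝ)) (𝓝 (g 0)) :=
      (hg.tendsto 0).mono_left nhdsWithin_le_nhds
    exact tendsto_nhds_unique h2 h1
  intro u
  rcases lt_trichotomy u 0 with hu | hu | hu
  · -- u < 0
    have key : ∀ s ∈ Icc u 0, (g u / u) * s ≤ g s := by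
      intro s hs
      rcases eq_or_lt_of_le hs.2 with h | h
      · simp [h, g0]
      · have hmono := hg4.1 (mem_Iio.2 hu) (mem_Iio.2 h) hs.1
        simp only [abs_of_neg hu, abs_of_neg h] at hmono
        have hs' : (0:ℝ) < -s := by linarith
        have : (g u / -u) * (-s) ≤ (g s / -s) * (-s) :=
          mul_le_mul_of_nonneg_right hmono hs'.le
        have hne : s ≠ 0 := h.ne
        calc (g u / u) * s = (g u / -u) * (-s) := by ring
          _ ≤ (g s / -s) * (-s) := this
          _ = g s := by field_simp
    have hint : ∫ s in u..(0:ℝ), (g u / u) * s ≤ ∫ s in u..(0:ℝ), g s :=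
      intervalIntegral.integral_mono_on hu.le
        ((continuous_const.mul continuous_id).intervalIntegrable _ _)
        (hg.intervalIntegrable _ _) key
    have hval : ∫ s in u..(0:ℝ), (g u / u) * s = (g u / u) * ((0^2 - u^2)/2) := by
      rw [intervalIntegral.integral_const_mul]
      simp [integral_id]
    rw [hval] at hint
    have hG : Gfun g u = -∫ s in u..(0:ℝ), g s := by
      rw [Gfun, intervalIntegral.integral_symm]
    rw [hG]
    have hu' : u ≠ 0 := hu.ne
    have : (g u / u) * ((0^2 - u^2)/2) = -(g u * u) / 2 := by field_simp; ring
    rw [this] at hint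
    linarith
  · simp [hu, Gfun]
  · -- u > 0
    have key : ∀ s ∈ Icc (0:ℝ) u, g s ≤ (g u / u) * s := by
      intro s hs
      rcases eq_or_lt_of_le hs.1 with h | h
      · simp [← h, g0]
      · have hmono := hg4.2 (mem_Ioi.2 h) (mem_Ioi.2 hu) hs.2
        simp only [abs_of_pos h, abs_of_pos hu] at hmono
        have hne : s ≠ 0 := h.ne'
        calc g s = (g s / s) * s := by field_simp
          _ ≤ (g u / u) * s := mul_le_mul_of_nonneg_right hmono h.le
    have hint : ∫ s in (0:ℝ)..u, g s ≤ ∫ s in (0:ℝ)..u, (g u / u) * s :=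
      intervalIntegral.integral_mono_on hu.le
        (hg.intervalIntegrable _ _)
        ((continuous_const.mul continuous_id).intervalIntegrable _ _) key
    have hval : ∫ s in (0:ℝ)..u, (g u / u) * s = (g u / u) * ((u^2 - 0^2)/2) := by
      rw [intervalIntegral.integral_const_mul]
      simp [integral_id]
    rw [hval] at hint
    have hu' : u ≠ 0 := hu.ne'
    have : (g u / u) * ((u^2 - 0^2)/2) = (g u * u) / 2 := by field_simp; ring
    rw [this] at hint
    rw [Gfun]
    linarith
end
end

section
/- Assume (g1) and (g4). Then for all u, v ∈ ℝ and all t ≥ 0: g(u)·(((t²−1)/2)·u + t·v) + G(u) − G(t·u + v) ≤ 0. -/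
open Topology Filter Set

noncomputable section

private lemma aux_g_zero (g : ℝ → ℝ) (hg : Continuous g) (hg1 : G1 g) : g 0 = 0 := by
  have h1 : Tendsto g (𝓝[≠] (0:ℝ)) (𝓝 0) := by
    have h2 : Tendsto (fun u : ℝ => (g u / u) * u) (𝓝[≠] (0:ℝ)) (𝓝 (0 * 0)) :=
      hg1.mul (tendsto_id.mono_left nhdsWithin_le_nhds)
    rw [zero_mul] at h2
    refine h2.congr' ?_
    filter_upwards [self_mem_nhdsWithin] with x hx
    exact div_mul_cancel₀ (g x) hx
  have h2 : Tendsto g (𝓝[≠] (0:ℝ)) (𝓝 (g 0)) :=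
    (hg.tendsto 0).mono_left nhdsWithin_le_nhds
  exact tendsto_nhds_unique h2 h1

/-- On the positive axis, `g u / |u| ≥ 0`. -/
private lemma aux_pos (g : ℝ → ℝ) (hg1 : G1 g) (hg4 : G4 g) :
    ∀ u : ℝ, 0 < u → 0 ≤ g u / u := by
  intro u hu
  have htend : Tendsto (fun x => g x / x) (𝓝[>] (0:ℝ)) (𝓝 0) :=
    hg1.mono_left (nhdsWithin_mono _ (fun x hx => ne_of_gt hx))
  have hev : ∀ᶠ x in 𝓝[>] (0:ℝ), g x / x ≤ g u / u := by
    filter_upwards [Ioo_mem_nhdsGT_of_mem (left_mem_Ico.2 hu)] with x hx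
    have h1 := hg4.2 (mem_Ioi.2 hx.1) (mem_Ioi.2 hu) hx.2.le
    simpa [abs_of_pos hx.1, abs_of_pos hu] using h1
  exact le_of_tendsto htend hev

/-- On the negative axis, `g u / |u| ≤ 0`, i.e. `0 ≤ g u / u`. -/
private lemma aux_neg (g : ℝ → ℝ) (hg1 : G1 g) (hg4 : G4 g) :
    ∀ u : ℝ, u < 0 → 0 ≤ g u / u := by
  intro u hu
  have htend : Tendsto (fun x => g x / |x|) (𝓝[<] (0:ℝ)) (𝓝 0) := by
    have h0 : Tendsto (fun x => -(g x / x)) (𝓝[<] (0:ℝ)) (𝓝 (-0)) :=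
      (hg1.mono_left (nhdsWithin_mono _ (fun x hx => ne_of_lt hx))).neg
    rw [neg_zero] at h0
    refine h0.congr' ?_
    filter_upwards [self_mem_nhdsWithin] with x hx
    rw [abs_of_neg hx, div_neg]
  have hev : ∀ᶠ x in 𝓝[<] (0:ℝ), g u / |u| ≤ g x / |x| := by
    filter_upwards [Ioo_mem_nhdsLT_of_mem (mem_Ioc.2 ⟨hu, le_refl _⟩)] with x hx
    exact hg4.1 (mem_Iio.2 hu) (mem_Iio.2 hx.2) hx.1.le
  have h1 : g u / |u| ≤ 0 := ge_of_tendsto htend hev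
  rw [abs_of_neg hu, div_neg] at h1
  linarith


private lemma int_lin (c a b : ℝ) : (∫ σ in a..b, c * σ) = c * ((b^2 - a^2)/2) := by
  rw [intervalIntegral.integral_const_mul, integral_id]

private lemma gsign_pos (g : ℝ → ℝ) (hg : Continuous g) (hg1 : G1 g) (hg4 : G4 g) :
    ∀ σ : ℝ, 0 ≤ σ → 0 ≤ g σ := by
  intro σ hσ
  rcases eq_or_lt_of_le hσ with h|h
  · rw [← h, aux_g_zero g hg hg1]
  · have := aux_pos g hg1 hg4 σ h
    have := mul_nonneg this h.le
    rwa [div_mul_cancel₀ (g σ) (ne_of_gt h)] at this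

private lemma gsign_neg (g : ℝ → ℝ) (hg : Continuous g) (hg1 : G1 g) (hg4 : G4 g) :
    ∀ σ : ℝ, σ ≤ 0 → g σ ≤ 0 := by
  intro σ hσ
  rcases eq_or_lt_of_le hσ with h|h
  · rw [h, aux_g_zero g hg hg1]
  · have h1 := aux_neg g hg1 hg4 σ h
    have := mul_nonpos_of_nonneg_of_nonpos h1 hσ
    rwa [div_mul_cancel₀ (g σ) (ne_of_lt h)] at this

/-- for `0 < u`, on `[0,u]` we have `g σ ≤ (g u / u) σ`. -/
private lemma cmp1 (g : ℝ → ℝ) (hg : Continuous g) (hg1 : G1 g) (hg4 : G4 g)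
    {u : ℝ} (hu : 0 < u) : ∀ σ ∈ Icc (0:ℝ) u, g σ ≤ (g u / u) * σ := by
  intro σ hσ
  rcases eq_or_lt_of_le hσ.1 with h|h
  · rw [← h, aux_g_zero g hg hg1, mul_zero]
  · have h1 := hg4.2 (mem_Ioi.2 h) (mem_Ioi.2 hu) hσ.2
    simp only [abs_of_pos h, abs_of_pos hu] at h1
    exact (div_le_iff₀ h).1 (h1.trans_eq (by ring))

/-- for `0 < u`, on `[u,∞)` we have `(g u / u) σ ≤ g σ`. -/
private lemma cmp2 (g : ℝ → ℝ) (hg4 : G4 g) {u : ℝ} (hu : 0 < u) :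
    ∀ σ : ℝ, u ≤ σ → (g u / u) * σ ≤ g σ := by
  intro σ hσ
  have hσ0 : 0 < σ := hu.trans_le hσ
  have h1 := hg4.2 (mem_Ioi.2 hu) (mem_Ioi.2 hσ0) hσ
  simp only [abs_of_pos hu, abs_of_pos hσ0] at h1
  calc (g u / u) * σ ≤ (g σ / σ) * σ := by
        apply mul_le_mul_of_nonneg_right h1 hσ0.le
    _ = g σ := div_mul_cancel₀ (g σ) (ne_of_gt hσ0)

/-- for `u < 0`, on `[u,0]` we have `(g u / u) σ ≤ g σ`. -/
private lemma cmp3 (g : ℝ → ℝ) (hg : Continuous g) (hg1 : G1 g) (hg4 : G4 g)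
    {u : ℝ} (hu : u < 0) : ∀ σ ∈ Icc u (0:ℝ), (g u / u) * σ ≤ g σ := by
  intro σ hσ
  rcases eq_or_lt_of_le hσ.2 with h|h
  · rw [h, mul_zero, aux_g_zero g hg hg1]
  · have h1 := hg4.1 (mem_Iio.2 hu) (mem_Iio.2 h) hσ.1
    simp only [abs_of_neg hu, abs_of_neg h, div_neg] at h1
    have h2 : g σ / σ ≤ g u / u := by linarith
    exact (div_le_iff_of_neg h).1 h2

/-- for `u < 0`, on `(-∞,u]` we have `g σ ≤ (g u / u) σ`. -/
private lemma cmp4 (g : ℝ → ℝ) (hg4 : G4 g) {u : ℝ} (hu : u < 0) :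
    ∀ σ : ℝ, σ ≤ u → g σ ≤ (g u / u) * σ := by
  intro σ hσ
  have hσ0 : σ < 0 := hσ.trans_lt hu
  have h1 := hg4.1 (mem_Iio.2 hσ0) (mem_Iio.2 hu) hσ
  simp only [abs_of_neg hu, abs_of_neg hσ0, div_neg] at h1
  have h2 : g u / u ≤ g σ / σ := by linarith
  have := (le_div_iff_of_neg hσ0).1 h2
  linarith [this]


/-- Under (g1) and (g4): for all `u, v` and `t ≥ 0`,
`g(u)·(((t²−1)/2)·u + t·v) + G(u) − G(tu + v) ≤ 0`. -/
theorem statement15 (g : ℝ → ℝ) (hg : Continuous g) (hg1 : G1 g) (hg4 : G4 g) :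
    ∀ (u v t : ℝ), 0 ≤ t →
      g u * ((t ^ 2 - 1) / 2 * u + t * v) + Gfun g u - Gfun g (t * u + v) ≤ 0 := by
  intro u v t ht
  have h0 := aux_g_zero g hg hg1
  have hint : ∀ a b : ℝ, IntervalIntegrable g MeasureTheory.volume a b :=
    fun a b => hg.intervalIntegrable a b
  set c := g u / u with hc
  have hlin : ∀ a b : ℝ, IntervalIntegrable (fun σ => c * σ) MeasureTheory.volume a b :=
    fun a b => (continuous_const.mul continuous_id).intervalIntegrable a b
  set s := t * u + v with hsv
  clear_value c s
  have hdiff : Gfun g s - Gfun g u = ∫ σ in u..s, g σ :=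
    intervalIntegral.integral_interval_sub_left (hint 0 s) (hint 0 u)
  have key : g u * ((t ^ 2 - 1) / 2 * u + t * v) ≤ ∫ σ in u..s, g σ := by
    rcases lt_trichotomy u 0 with hu|hu|hu
    · -- u < 0
      have hc0 : 0 ≤ c := by rw [hc]; exact aux_neg g hg1 hg4 u hu
      have halg : g u * ((t ^ 2 - 1) / 2 * u + t * v)
          = c * (t * u * s - (t ^ 2 + 1) / 2 * u ^ 2) := by
        have hgu : g u = c * u := by rw [hc]; exact (div_mul_cancel₀ (g u) (ne_of_lt hu)).symm
        rw [hgu, hsv]; ring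
      rw [halg]
      rcases le_or_gt s 0 with hs0|hs0
      · have h1 : c * (t * u * s - (t ^ 2 + 1) / 2 * u ^ 2) ≤ c * ((s ^ 2 - u ^ 2) / 2) := by
          apply mul_le_mul_of_nonneg_left _ hc0
          nlinarith [sq_nonneg (s - t * u)]
        refine h1.trans ?_
        rcases le_total u s with hus|hus
        · have h2 := intervalIntegral.integral_mono_on hus (hlin u s) (hint u s)
            (fun σ hσ => by rw [hc]; exact cmp3 g hg hg1 hg4 hu σ ⟨hσ.1, hσ.2.trans hs0⟩)
          rw [int_lin] at h2
          exact h2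
        · have h2 := intervalIntegral.integral_mono_on hus (hint s u) (hlin s u)
            (fun σ hσ => by rw [hc]; exact cmp4 g hg4 hu σ hσ.2)
          rw [int_lin] at h2
          have h3 : (∫ σ in u..s, g σ) = -∫ σ in s..u, g σ :=
            intervalIntegral.integral_symm s u
          rw [h3]; linarith
      · have h1 : c * (t * u * s - (t ^ 2 + 1) / 2 * u ^ 2) ≤ c * (-(u ^ 2) / 2) := by
          apply mul_le_mul_of_nonneg_left _ hc0
          nlinarith [mul_nonneg (mul_nonneg ht hs0.le) (neg_nonneg.2 hu.le)]
        refine h1.trans ?_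
        have hsplit : (∫ σ in u..(0:ℝ), g σ) + ∫ σ in (0:ℝ)..s, g σ = ∫ σ in u..s, g σ :=
          intervalIntegral.integral_add_adjacent_intervals (hint u 0) (hint 0 s)
        have h2 : 0 ≤ ∫ σ in (0:ℝ)..s, g σ :=
          intervalIntegral.integral_nonneg hs0.le
            (fun σ hσ => gsign_pos g hg hg1 hg4 σ hσ.1)
        have h3 := intervalIntegral.integral_mono_on hu.le (hlin u 0) (hint u 0)
          (fun σ hσ => by rw [hc]; exact cmp3 g hg hg1 hg4 hu σ hσ)
        rw [int_lin] at h3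
        have : c * ((0 ^ 2 - u ^ 2) / 2) = c * (-(u ^ 2) / 2) := by ring
        rw [this] at h3
        linarith
    · -- u = 0
      subst hu
      rw [h0, zero_mul]
      have hs' : s = v := by rw [hsv]; ring
      rcases le_or_gt 0 s with hs0|hs0
      · exact intervalIntegral.integral_nonneg hs0
          (fun σ hσ => gsign_pos g hg hg1 hg4 σ hσ.1)
      · have h2 : (∫ σ in s..(0:ℝ), g σ) ≤ 0 := by
          have := intervalIntegral.integral_mono_on hs0.le (hint s 0)
            ((continuous_const : Continuous (fun _ : ℝ => (0:ℝ))).intervalIntegrable s 0)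
            (fun σ hσ => gsign_neg g hg hg1 hg4 σ hσ.2)
          simpa using this
        have h3 : (∫ σ in (0:ℝ)..s, g σ) = -∫ σ in s..(0:ℝ), g σ :=
          intervalIntegral.integral_symm s 0
        rw [h3]; linarith
    · -- 0 < u
      have hc0 : 0 ≤ c := by rw [hc]; exact aux_pos g hg1 hg4 u hu
      have halg : g u * ((t ^ 2 - 1) / 2 * u + t * v)
          = c * (t * u * s - (t ^ 2 + 1) / 2 * u ^ 2) := by
        have hgu : g u = c * u := by rw [hc]; exact (div_mul_cancel₀ (g u) (ne_of_gt hu)).symm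
        rw [hgu, hsv]; ring
      rw [halg]
      rcases le_or_gt 0 s with hs0|hs0
      · have h1 : c * (t * u * s - (t ^ 2 + 1) / 2 * u ^ 2) ≤ c * ((s ^ 2 - u ^ 2) / 2) := by
          apply mul_le_mul_of_nonneg_left _ hc0
          nlinarith [sq_nonneg (s - t * u)]
        refine h1.trans ?_
        rcases le_total u s with hus|hus
        · have h2 := intervalIntegral.integral_mono_on hus (hlin u s) (hint u s)
            (fun σ hσ => by rw [hc]; exact cmp2 g hg4 hu σ hσ.1)
          rw [int_lin] at h2
          exact h2
        · have h2 := intervalIntegral.integral_mono_on hus (hint s u) (hlin s u)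
            (fun σ hσ => by rw [hc]; exact cmp1 g hg hg1 hg4 hu σ ⟨hs0.trans hσ.1, hσ.2⟩)
          rw [int_lin] at h2
          have h3 : (∫ σ in u..s, g σ) = -∫ σ in s..u, g σ :=
            intervalIntegral.integral_symm s u
          rw [h3]; linarith
      · have h1 : c * (t * u * s - (t ^ 2 + 1) / 2 * u ^ 2) ≤ c * (-(u ^ 2) / 2) := by
          apply mul_le_mul_of_nonneg_left _ hc0
          nlinarith [mul_nonneg (mul_nonneg ht hu.le) (neg_nonneg.2 hs0.le)]
        refine h1.trans ?_
        have hsplit : (∫ σ in u..(0:ℝ), g σ) + ∫ σ in (0:ℝ)..s, g σ = ∫ σ in u..s, g σ :=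
          intervalIntegral.integral_add_adjacent_intervals (hint u 0) (hint 0 s)
        have h2 : (∫ σ in s..(0:ℝ), g σ) ≤ 0 := by
          have := intervalIntegral.integral_mono_on hs0.le (hint s 0)
            ((continuous_const : Continuous (fun _ : ℝ => (0:ℝ))).intervalIntegrable s 0)
            (fun σ hσ => gsign_neg g hg hg1 hg4 σ hσ.2)
          simpa using this
        have h2' : 0 ≤ ∫ σ in (0:ℝ)..s, g σ := by
          rw [intervalIntegral.integral_symm s 0]; linarith
        have h3 := intervalIntegral.integral_mono_on hu.le (hint 0 u) (hlin 0 u)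
          (fun σ hσ => by rw [hc]; exact cmp1 g hg hg1 hg4 hu σ hσ)
        rw [int_lin] at h3
        have h4 : (∫ σ in u..(0:ℝ), g σ) = -∫ σ in (0:ℝ)..u, g σ :=
          intervalIntegral.integral_symm 0 u
        nlinarith [h3, h2', hsplit, h4]
  linarith [key, hdiff]
end
end
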